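/- Let d be a negative-type distance on X, p ≥ 2 an integer, A, B ⊆ X nonempty, and let P₁,...,P_m ⊆ X be nonempty sets with coefficients λ_i > 0 satisfying ∑_i λ_i·χ^{P_i} = (p/(p−1))·χ^{A\B} + χ^{B\A} and |P_i ∩ A| ≤ p, |P_i ∩ B| ≤ p − 1, with P_i ⊆ A ∪ B. Then (|A|/(2p−1))·∑_i λ_i·d(P_i) ≤ (p/(p−1))·d(A,A) + d(A,B). -/
import Mathlib


open Finset

/-- `d` is a distance of negative type on the finite type `X`. -/
def NegType {X : Type*} [Fintype X] (d : X → X → ℝ) : Prop :=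
  ∀ x : X → ℝ, ∑ i, x i = 0 → ∑ i, ∑ j, x i * d i j * x j ≤ 0

/-- The dispersion of a finite set: sum of distances over unordered pairs. -/
noncomputable def disp {X : Type*} (d : X → X → ℝ) (A : Finset X) : ℝ :=
  (∑ a ∈ A, ∑ b ∈ A, d a b) / 2

/-- Sum of all distances between two sets. -/
def dsum {X : Type*} (d : X → X → ℝ) (A B : Finset X) : ℝ :=
  ∑ a ∈ A, ∑ b ∈ B, d a b

lemma key_ind {X : Type*} [Fintype X] [DecidableEq X] (d : X → X → ℝ) (U V : Finset X) :
    ∑ i, ∑ j, ((if i ∈ U then (1:ℝ) else 0) * d i j * (if j ∈ V then (1:ℝ) else 0))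
      = dsum d U V := by
  simp [dsum, ite_mul, mul_ite, Finset.sum_ite_mem]

lemma dsum_comm {X : Type*} (d : X → X → ℝ) (hsymm : ∀ a b, d a b = d b a)
    (S T : Finset X) : dsum d S T = dsum d T S := by
  rw [dsum, dsum, Finset.sum_comm]
  exact Finset.sum_congr rfl fun a _ => Finset.sum_congr rfl fun b _ => hsymm b a

lemma dsum_nonneg {X : Type*} (d : X → X → ℝ) (hnonneg : ∀ a b, 0 ≤ d a b)
    (S T : Finset X) : 0 ≤ dsum d S T :=
  Finset.sum_nonneg fun a _ => Finset.sum_nonneg fun b _ => hnonneg a b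

lemma negpair {X : Type*} [Fintype X] [DecidableEq X] (d : X → X → ℝ)
    (hsymm : ∀ a b, d a b = d b a) (hneg : NegType d) (S T : Finset X) :
    (T.card : ℝ)^2 * dsum d S S + (S.card : ℝ)^2 * dsum d T T
      ≤ 2 * S.card * T.card * dsum d S T := by
  set a : ℝ := (T.card : ℝ) with ha
  set b : ℝ := (S.card : ℝ) with hb
  set x : X → ℝ := fun v => a * (if v ∈ S then 1 else 0) - b * (if v ∈ T then 1 else 0) with hx
  have hsum : ∑ v, x v = 0 := by
    simp only [hx, Finset.sum_sub_distrib, ← Finset.mul_sum]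
    simp [Finset.sum_ite_mem, ha, hb, mul_comm]
  have h := hneg x hsum
  have expand : (∑ i, ∑ j, x i * d i j * x j)
      = a*a* dsum d S S - a*b* dsum d S T - b*a* dsum d T S + b*b* dsum d T T := by
    rw [← key_ind d S S, ← key_ind d S T, ← key_ind d T S, ← key_ind d T T]
    simp only [Finset.mul_sum, ← Finset.sum_sub_distrib, ← Finset.sum_add_distrib]
    refine Finset.sum_congr rfl fun i _ => Finset.sum_congr rfl fun j _ => ?_
    simp only [hx]; ring
  rw [expand, dsum_comm d hsymm T S] at h
  nlinarith [h]

theorem stmt_9 {X : Type*} [Fintype X] [DecidableEq X] (d : X → X → ℝ)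
    (hsymm : ∀ a b, d a b = d b a) (hnonneg : ∀ a b, 0 ≤ d a b)
    (hdiag : ∀ a, d a a = 0) (hneg : NegType d)
    (p : ℕ) (hp : 2 ≤ p) (A B : Finset X) (hA : A.Nonempty) (hB : B.Nonempty)
    (m : ℕ) (P : Fin m → Finset X) (lam : Fin m → ℝ)
    (hPne : ∀ i, (P i).Nonempty) (hlam : ∀ i, 0 < lam i)
    (hPA : ∀ i, (P i ∩ A).card ≤ p) (hPB : ∀ i, (P i ∩ B).card ≤ p - 1)
    (hPsub : ∀ i, P i ⊆ A ∪ B)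
    (hcov : ∀ x : X, ∑ i, lam i * (if x ∈ P i then (1 : ℝ) else 0)
      = (p : ℝ) / ((p : ℝ) - 1) * (if x ∈ A \ B then (1 : ℝ) else 0)
        + (if x ∈ B \ A then (1 : ℝ) else 0)) :
    (A.card : ℝ) / (2 * p - 1) * ∑ i, lam i * disp d (P i)
      ≤ (p : ℝ) / ((p : ℝ) - 1) * dsum d A A + dsum d A B := by
  have hpR : (2:ℝ) ≤ (p:ℝ) := by exact_mod_cast hp
  have hq : (0:ℝ) < 2 * (p:ℝ) - 1 := by linarith
  have hcoef : (0:ℝ) ≤ (p:ℝ) / ((p:ℝ) - 1) := by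
    apply div_nonneg <;> linarith
  have hA0 : (0:ℝ) < (A.card : ℝ) := by
    exact_mod_cast Finset.card_pos.mpr hA
  -- Step 1: per-part inequality from negative type
  have step1 : ∀ i, (A.card : ℝ) / (2 * p - 1) * disp d (P i) ≤ dsum d A (P i) := by
    intro i
    have hcardN : (P i).card ≤ p + (p - 1) := by
      calc (P i).card = ((P i ∩ A) ∪ (P i ∩ B)).card := by
            rw [← Finset.inter_union_distrib_left, Finset.inter_eq_left.mpr (hPsub i)]
        _ ≤ (P i ∩ A).card + (P i ∩ B).card := Finset.card_union_le _ _
        _ ≤ p + (p - 1) := add_le_add (hPA i) (hPB i)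
    have hqle : ((P i).card : ℝ) ≤ 2 * (p:ℝ) - 1 := by
      have h1 : (1:ℕ) ≤ p := by omega
      have := (Nat.cast_le (α := ℝ)).mpr hcardN
      push_cast [Nat.cast_sub h1] at this
      linarith
    have hq0 : (0:ℝ) < ((P i).card : ℝ) := by
      exact_mod_cast Finset.card_pos.mpr (hPne i)
    have hn := negpair d hsymm hneg A (P i)
    have hAA := dsum_nonneg d hnonneg A A
    have hAP := dsum_nonneg d hnonneg A (P i)
    set q : ℝ := ((P i).card : ℝ)
    set a : ℝ := ((A.card : ℝ))
    set dPP := dsum d (P i) (P i)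
    set dAP := dsum d A (P i)
    have h1 : a * (a * dPP) ≤ a * (2 * q * dAP) := by nlinarith [hn, mul_nonneg (mul_nonneg hq0.le hq0.le) hAA]
    have h2 : a * dPP ≤ 2 * q * dAP := le_of_mul_le_mul_left h1 hA0
    have h3 : a * dPP ≤ 2 * (2 * (p:ℝ) - 1) * dAP := by nlinarith [hAP, hqle]
    have hdisp : disp d (P i) = dPP / 2 := rfl
    rw [hdisp, div_mul_div_comm, div_le_iff₀ (by positivity)]
    linarith
  -- Step 2: expansion via the fractional cover
  have key2 : ∀ a : X, ∑ i, lam i * (∑ x ∈ P i, d a x)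
      = (p:ℝ)/((p:ℝ)-1) * ∑ x ∈ A \ B, d a x + ∑ x ∈ B \ A, d a x := by
    intro a
    have e1 : ∀ (S : Finset X), ∑ x ∈ S, d a x
        = ∑ x, (if x ∈ S then (1:ℝ) else 0) * d a x := by
      intro S; simp [ite_mul, Finset.sum_ite_mem]
    simp only [e1, Finset.mul_sum]
    rw [Finset.sum_comm, ← Finset.sum_add_distrib]
    refine Finset.sum_congr rfl fun x _ => ?_
    have h := hcov x
    calc ∑ i, lam i * ((if x ∈ P i then (1:ℝ) else 0) * d a x)
        = (∑ i, lam i * (if x ∈ P i then (1:ℝ) else 0)) * d a x := by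
          rw [Finset.sum_mul]; exact Finset.sum_congr rfl fun i _ => by ring
      _ = _ := by rw [h]; ring
  have hexp : ∑ i, lam i * dsum d A (P i)
      = (p:ℝ)/((p:ℝ)-1) * dsum d A (A \ B) + dsum d A (B \ A) := by
    have e2 : ∀ i : Fin m, lam i * dsum d A (P i) = ∑ a ∈ A, lam i * ∑ x ∈ P i, d a x := by
      intro i; rw [dsum, Finset.mul_sum]
    rw [Finset.sum_congr rfl fun i _ => e2 i, Finset.sum_comm]
    rw [Finset.sum_congr rfl fun a (_ : a ∈ A) => key2 a, Finset.sum_add_distrib,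
      ← Finset.mul_sum]
    rfl
  -- Step 3: monotonicity
  have m1 : dsum d A (A \ B) ≤ dsum d A A :=
    Finset.sum_le_sum fun a _ =>
      Finset.sum_le_sum_of_subset_of_nonneg Finset.sdiff_subset fun x _ _ => hnonneg a x
  have m2 : dsum d A (B \ A) ≤ dsum d A B :=
    Finset.sum_le_sum fun a _ =>
      Finset.sum_le_sum_of_subset_of_nonneg Finset.sdiff_subset fun x _ _ => hnonneg a x
  calc (A.card : ℝ) / (2 * p - 1) * ∑ i, lam i * disp d (P i)
      = ∑ i, lam i * ((A.card : ℝ) / (2 * p - 1) * disp d (P i)) := by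
        rw [Finset.mul_sum]; exact Finset.sum_congr rfl fun i _ => by ring
    _ ≤ ∑ i, lam i * dsum d A (P i) :=
        Finset.sum_le_sum fun i _ => mul_le_mul_of_nonneg_left (step1 i) (hlam i).le
    _ = (p:ℝ)/((p:ℝ)-1) * dsum d A (A \ B) + dsum d A (B \ A) := hexp
    _ ≤ (p:ℝ)/((p:ℝ)-1) * dsum d A A + dsum d A B :=
        add_le_add (mul_le_mul_of_nonneg_left m1 hcoef) m2
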